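/- arXiv:0710.1936 — 5 statements merged into one kernel-verified Lean document; each statement's English description precedes it below -/
import Mathlib

section
/- Let n > 1 be an integer and a ≥ 1 an integer. Then a is regular (mod n) if and only if gcd(a, n) is a unitary divisor of n. -/
-- An integer `a` is regular (mod `n`) if there is an integer `x`
-- with `a ^ 2 * x ≡ a (mod n)`.
def IsRegularMod (n a : ℤ) : Prop := ∃ x : ℤ, a ^ 2 * x ≡ a [ZMOD n]

-- `rho n` is the number of integers `a` with `1 ≤ a ≤ n` that are regular (mod `n`).
open Classical in
noncomputable def rho (n : ℕ) : ℕ :=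
  ((Finset.Icc 1 n).filter fun a : ℕ => IsRegularMod (n : ℤ) (a : ℤ)).card

/-- `d` is a unitary divisor of `n` if `d ∣ n` and `gcd (d, n / d) = 1`. -/
def IsUnitaryDivisor (d n : ℕ) : Prop := d ∣ n ∧ Nat.gcd d (n / d) = 1

/-! If `d = gcd a n`, write `a = d a'` and `n = d m` with `a'`, `m` coprime; then
`gcd (a², n) = d · gcd (d, m)`. On the other hand `a² x ≡ a (mod n)` is a linear congruence in `x`,
solvable exactly when `gcd (a², n) ∣ a`, i.e. when `gcd (a², n) ∣ d`. So `a` is regular iff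
`d · gcd (d, m) ∣ d`, i.e. iff `gcd (d, n / d) = 1`. -/

theorem isRegularMod_iff_gcd_sq_dvd (n a : ℤ) :
    IsRegularMod n a ↔ (Int.gcd (a ^ 2) n : ℤ) ∣ a := by
  rw [Int.coe_gcd, gcd_dvd_iff_exists]
  simp only [IsRegularMod, Int.modEq_iff_add_fac]

theorem Nat.gcd_sq_eq_gcd_mul_gcd_gcd_div (a n : ℕ) :
    Nat.gcd (a ^ 2) n = Nat.gcd a n * Nat.gcd (Nat.gcd a n) (n / Nat.gcd a n) := by
  obtain ⟨a', m, hcop, ha, hn⟩ := Nat.exists_coprime a n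
  set d := Nat.gcd a n
  rcases Nat.eq_zero_or_pos d with hd | hd
  · simp [ha, hn, hd]
  rw [hn, Nat.mul_div_cancel _ hd, ha, show (a' * d) ^ 2 = d * (a' ^ 2 * d) by ring, mul_comm m,
    Nat.gcd_mul_left, (hcop.pow_left 2).gcd_mul_left_cancel]

theorem regular_iff_gcd_unitary_general (n : ℕ) (hn : 1 < n) (a : ℕ) :
    IsRegularMod (n : ℤ) (a : ℤ) ↔ IsUnitaryDivisor (Nat.gcd a n) n := by
  have hd : 0 < Nat.gcd a n := Nat.gcd_pos_of_pos_right a (by omega)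
  have hgcd_cast : Int.gcd ((a : ℤ) ^ 2) n = Nat.gcd (a ^ 2) n := by
    rw [← Int.gcd_natCast_natCast]; push_cast; rfl
  have hdvd_iff : Nat.gcd (a ^ 2) n ∣ a ↔ Nat.gcd (a ^ 2) n ∣ Nat.gcd a n := by
    rw [Nat.dvd_gcd_iff, and_iff_left (Nat.gcd_dvd_right _ _)]
  rw [isRegularMod_iff_gcd_sq_dvd, hgcd_cast, Int.natCast_dvd_natCast, hdvd_iff,
    Nat.gcd_sq_eq_gcd_mul_gcd_gcd_div, IsUnitaryDivisor, and_iff_right (Nat.gcd_dvd_right a n)]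
  conv_lhs => rhs; rw [← mul_one (Nat.gcd a n)]
  rw [Nat.mul_dvd_mul_iff_left hd, Nat.dvd_one]

theorem regular_iff_gcd_unitary (n : ℕ) (hn : 1 < n) (a : ℕ) (ha : 1 ≤ a) :
    IsRegularMod (n : ℤ) (a : ℤ) ↔ IsUnitaryDivisor (Nat.gcd a n) n :=
  regular_iff_gcd_unitary_general n hn a
end

section
/- For every integer n ≥ 1, ϱ(n)/φ(n) = ∑_{d || n} 1/φ(d), where the sum is over the unitary divisors d of n. -/
open Finset
open scoped Nat

theorem isCoprime_iff_exists_dvd_one_sub {R : Type*} [CommRing R] {a m : R} :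
    IsCoprime a m ↔ ∃ x, m ∣ 1 - a * x := by
  constructor
  · rintro ⟨u, v, h⟩
    exact ⟨u, v, by linear_combination -h⟩
  · rintro ⟨x, v, h⟩
    exact ⟨x, v, by linear_combination -h⟩

theorem isRegularMod_mul_iff {g m a : ℤ} (hg : g ≠ 0) (ham : IsCoprime a m) :
    IsRegularMod (m * g) (a * g) ↔ IsCoprime g m := by
  calc IsRegularMod (m * g) (a * g) ↔ ∃ x, m ∣ 1 - a * g * x := by
        refine exists_congr fun x => ?_
        rw [Int.modEq_iff_dvd, show a * g - (a * g) ^ 2 * x = g * (a * (1 - a * g * x)) by ring,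
          mul_comm m g, mul_dvd_mul_iff_left hg]
        exact ⟨ham.symm.dvd_of_dvd_mul_left, fun h => dvd_mul_of_dvd_right h _⟩
    _ ↔ IsCoprime (a * g) m := isCoprime_iff_exists_dvd_one_sub.symm
    _ ↔ IsCoprime g m := by rw [IsCoprime.mul_left_iff, and_iff_right ham]

theorem isRegularMod_iff {n : ℤ} (hn : n ≠ 0) (a : ℤ) :
    IsRegularMod n a ↔ IsCoprime (n.gcd a : ℤ) (n / n.gcd a) := by
  obtain ⟨g, m, a', hg, hcop, rfl, rfl⟩ := Int.exists_gcd_one' (Int.gcd_pos_of_ne_zero_left a hn)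
  have hg' : (g : ℤ) ≠ 0 := by exact_mod_cast hg.ne'
  rw [Int.gcd_mul_right, hcop, one_mul, Int.natAbs_natCast, Int.mul_ediv_cancel _ hg',
    isRegularMod_mul_iff hg' (Int.isCoprime_iff_gcd_eq_one.mpr (Int.gcd_comm m a' ▸ hcop))]

theorem isRegularMod_natCast_iff {n : ℕ} (hn : n ≠ 0) (a : ℕ) :
    IsRegularMod n a ↔ (n.gcd a).Coprime (n / n.gcd a) := by
  rw [isRegularMod_iff (by exact_mod_cast hn), Int.gcd_natCast_natCast, ← Int.natCast_div,
    Nat.isCoprime_iff_coprime]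

theorem Nat.card_filter_Icc_gcd_eq {n d : ℕ} (hd : d ∣ n) :
    #{a ∈ Icc 1 n | n.gcd a = d} = φ (n / d) := by
  rw [Nat.totient_div_of_dvd hd, ← Nat.count_eq_card_filter_range, ← Ico_add_one_right_eq_Icc,
    add_comm n 1]
  exact Nat.filter_Ico_card_eq_of_periodic 1 n _ ((Nat.periodic_gcd n).comp (· = d))

theorem rho_eq_sum_totient {n : ℕ} (hn : 0 < n) :
    rho n = ∑ d ∈ n.divisors.filter (fun d => Nat.gcd d (n / d) = 1), φ (n / d) := by
  have hrho : rho n = #{a ∈ Icc 1 n | (n.gcd a).Coprime (n / n.gcd a)} := by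
    rw [rho]
    congr 1
    ext a
    simp only [mem_filter, isRegularMod_natCast_iff hn.ne']
  have hmaps : Set.MapsTo n.gcd ↑{a ∈ Icc 1 n | (n.gcd a).Coprime (n / n.gcd a)}
      ↑(n.divisors.filter fun d => Nat.gcd d (n / d) = 1) := fun a ha => by
    simp only [coe_filter, Set.mem_ofPred_eq, Nat.mem_divisors] at ha ⊢
    exact ⟨⟨Nat.gcd_dvd_left n a, hn.ne'⟩, ha.2⟩
  rw [hrho, card_eq_sum_card_fiberwise hmaps]
  refine sum_congr rfl fun d hd => ?_
  rw [mem_filter, Nat.mem_divisors] at hd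
  rw [filter_filter, ← Nat.card_filter_Icc_gcd_eq hd.1.1]
  exact congrArg card (filter_congr fun a _ => and_iff_right_of_imp fun had => had ▸ hd.2)

theorem Nat.totient_eq_totient_mul_totient_div {n d : ℕ} (hd : d ∣ n) (h : d.Coprime (n / d)) :
    φ n = φ d * φ (n / d) := by
  rw [← Nat.totient_mul h, Nat.mul_div_cancel' hd]

theorem rho_div_totient_eq_sum (n : ℕ) (hn : 1 ≤ n) :
    (rho n : ℚ) / (Nat.totient n : ℚ) =
      ∑ d ∈ n.divisors.filter (fun d => Nat.gcd d (n / d) = 1),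
        (1 : ℚ) / (Nat.totient d : ℚ) := by
  rw [rho_eq_sum_totient hn, Nat.cast_sum, sum_div]
  refine sum_congr rfl fun d hd => ?_
  rw [mem_filter, Nat.mem_divisors] at hd
  have hφ := Nat.totient_eq_totient_mul_totient_div hd.1.1 hd.2
  have hφ_div : (φ (n / d) : ℚ) ≠ 0 :=
    Nat.cast_ne_zero.mpr (right_ne_zero_of_mul (hφ ▸ (Nat.totient_pos.mpr hn).ne'))
  rw [hφ, Nat.cast_mul, div_mul_cancel_right₀ hφ_div, one_div]
end

section
/- For every integer n > 1, φ(n) < ϱ(n) ≤ n; moreover, ϱ(n) = n if and only if n is squarefree. -/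
/-!
Regularity of `a` means `n ∣ a * (1 - a * x)` for some `x`. Units mod `n` are regular by Bézout,
and so is `n` itself, which is not a unit when `n > 1`: hence `φ(n) < ϱ(n)`. For squarefree `n`,
write `n = d * m` with `d = gcd(a, n)`; squarefreeness makes `d` coprime to `m`, hence also `a`
coprime to `m`, and `a` is regular modulo `d` and modulo `m` separately. Conversely, if `a² ∣ n`
and `a` is regular mod `n`, then `a² ∣ a`, so `a = 1`.
-/

open Finset

theorem isRegularMod_iff_dvd {n a : ℤ} : IsRegularMod n a ↔ ∃ x, n ∣ a * (1 - a * x) := by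
  refine exists_congr fun x => ?_
  rw [Int.modEq_iff_dvd]
  ring_nf

theorem isRegularMod_self (n : ℤ) : IsRegularMod n n :=
  isRegularMod_iff_dvd.mpr ⟨0, by simp⟩

theorem isRegularMod_of_isCoprime {n a : ℤ} (h : IsCoprime a n) : IsRegularMod n a := by
  obtain ⟨u, v, huv⟩ := h
  exact isRegularMod_iff_dvd.mpr ⟨u, a * v, by linear_combination -a * huv⟩

theorem isRegularMod_mul {d m a : ℤ} (hdm : IsCoprime d m) (hda : d ∣ a) (ham : IsCoprime a m) :
    IsRegularMod (d * m) a := by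
  obtain ⟨u, v, huv⟩ := ham
  exact isRegularMod_iff_dvd.mpr
    ⟨u, hdm.mul_dvd (hda.mul_right _) ⟨a * v, by linear_combination -a * huv⟩⟩

theorem isRegularMod_of_squarefree {n : ℤ} (hn : Squarefree n) (a : ℤ) : IsRegularMod n a := by
  obtain ⟨m, hm⟩ := gcd_dvd_right a n
  have hdm : IsRelPrime (gcd a n) m := (squarefree_mul_iff.mp (hm ▸ hn)).1
  have ham : IsRelPrime a m := fun c hca hcm =>
    hdm (dvd_gcd hca (hm ▸ hcm.mul_left _)) hcm
  rw [hm]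
  exact isRegularMod_mul hdm.isCoprime (gcd_dvd_left a n) ham.isCoprime

theorem IsRegularMod.sq_dvd_self {n a : ℤ} (h : IsRegularMod n a) (han : a ^ 2 ∣ n) :
    a ^ 2 ∣ a := by
  obtain ⟨x, hx⟩ := h
  exact (hx.of_dvd han).dvd_iff.mp (dvd_mul_right _ _)

theorem squarefree_of_forall_isRegularMod {n : ℕ} (hn : n ≠ 0)
    (h : ∀ a ∈ Icc 1 n, IsRegularMod n a) : Squarefree n := by
  intro a han
  have ha : a ≠ 0 := by
    rintro rfl
    exact hn (zero_dvd_iff.mp (by simpa using han))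
  have ha_le : a ≤ n := (Nat.le_mul_self a).trans (Nat.le_of_dvd (Nat.pos_of_ne_zero hn) han)
  have hreg := h a (mem_Icc.mpr ⟨Nat.one_le_iff_ne_zero.mpr ha, ha_le⟩)
  have hsq : a ^ 2 ∣ a := by exact_mod_cast hreg.sq_dvd_self (by rw [sq]; exact_mod_cast han)
  exact isUnit_of_dvd_one ((mul_dvd_mul_iff_left ha).mp (by simpa [sq] using hsq))

theorem totient_eq_card_filter_coprime_Icc (n : ℕ) :
    n.totient = #{a ∈ Icc 1 n | n.Coprime a} := by
  rw [← Nat.filter_coprime_Ico_eq_totient n 1, add_comm, Ico_add_one_right_eq_Icc]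

open Classical in
theorem rho_le_self (n : ℕ) : rho n ≤ n := by
  simpa [rho] using card_filter_le (Icc 1 n) _

open Classical in
theorem rho_eq_self_iff (n : ℕ) : rho n = n ↔ ∀ a ∈ Icc 1 n, IsRegularMod n a := by
  rw [rho, ← card_filter_eq_iff, Nat.card_Icc, Nat.add_sub_cancel]

open Classical in
theorem totient_lt_rho {n : ℕ} (hn : 1 < n) : n.totient < rho n := by
  rw [totient_eq_card_filter_coprime_Icc, rho]
  refine card_lt_card ((ssubset_iff_of_subset fun a ha => ?_).mpr ⟨n, ?_, ?_⟩)
  · rw [mem_filter] at ha ⊢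
    exact ⟨ha.1, isRegularMod_of_isCoprime (Nat.isCoprime_iff_coprime.mpr ha.2.symm)⟩
  · exact mem_filter.mpr ⟨mem_Icc.mpr ⟨hn.le, le_rfl⟩, isRegularMod_self n⟩
  · simp [Nat.coprime_self, hn.ne']

theorem totient_lt_rho_le_self (n : ℕ) (hn : 1 < n) :
    Nat.totient n < rho n ∧ rho n ≤ n ∧ (rho n = n ↔ Squarefree n) := by
  refine ⟨totient_lt_rho hn, rho_le_self n, ?_⟩
  rw [rho_eq_self_iff]
  exact ⟨squarefree_of_forall_isRegularMod (by omega),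
    fun h a _ => isRegularMod_of_squarefree (Int.squarefree_natCast.mpr h) a⟩
end

section
/- For every integer n ≥ 1, √n ≤ ϱ(n) ≤ n. -/
def IsVonNeumannRegular {M : Type*} [CommMonoid M] (a : M) : Prop := ∃ x : M, a ^ 2 * x = a

section CommMonoid

variable {M N : Type*} [CommMonoid M] [CommMonoid N]

theorem isVonNeumannRegular_map_iff (e : M ≃* N) {a : M} :
    IsVonNeumannRegular (e a) ↔ IsVonNeumannRegular a := by
  simp only [IsVonNeumannRegular, e.surjective.exists, ← map_pow, ← map_mul, e.apply_eq_iff_eq]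

theorem isVonNeumannRegular_prod_iff {x : M × N} :
    IsVonNeumannRegular x ↔ IsVonNeumannRegular x.1 ∧ IsVonNeumannRegular x.2 := by
  simp only [IsVonNeumannRegular, Prod.exists, Prod.ext_iff, Prod.fst_mul, Prod.snd_mul,
    Prod.pow_fst, Prod.pow_snd, exists_and_left, exists_and_right]

theorem card_isVonNeumannRegular_congr (e : M ≃* N) :
    Nat.card {a : M // IsVonNeumannRegular a} = Nat.card {b : N // IsVonNeumannRegular b} :=
  Nat.card_congr <| e.toEquiv.subtypeEquiv fun _ => (isVonNeumannRegular_map_iff e).symm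

theorem card_isVonNeumannRegular_prod :
    Nat.card {x : M × N // IsVonNeumannRegular x} =
      Nat.card {a : M // IsVonNeumannRegular a} * Nat.card {b : N // IsVonNeumannRegular b} := by
  rw [← Nat.card_prod]
  exact Nat.card_congr <|
    (Equiv.subtypeEquivRight fun _ => isVonNeumannRegular_prod_iff).trans
      Equiv.subtypeProdEquivProd

theorem IsUnit.isVonNeumannRegular {a : M} (ha : IsUnit a) : IsVonNeumannRegular a := by
  obtain ⟨u, rfl⟩ := ha
  exact ⟨↑u⁻¹, by rw [sq, mul_assoc, Units.mul_inv, mul_one]⟩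

end CommMonoid

theorem isVonNeumannRegular_zero {M : Type*} [CommMonoidWithZero M] :
    IsVonNeumannRegular (0 : M) :=
  ⟨0, mul_zero _⟩

theorem card_units_add_one_le_card_isVonNeumannRegular {M : Type*} [CommMonoidWithZero M]
    [Nontrivial M] [Finite M] :
    Nat.card Mˣ + 1 ≤ Nat.card {a : M // IsVonNeumannRegular a} := by
  have hzero : (0 : M) ∉ Set.range ((↑) : Mˣ → M) := fun ⟨u, hu⟩ => u.ne_zero hu
  calc Nat.card Mˣ + 1 = (insert 0 (Set.range ((↑) : Mˣ → M))).ncard := by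
        rw [Set.ncard_insert_of_notMem hzero, Set.ncard_range_of_injective Units.val_injective]
    _ ≤ {a : M | IsVonNeumannRegular a}.ncard := by
        refine Set.ncard_le_ncard ?_
        rintro _ (rfl | ⟨u, rfl⟩)
        exacts [isVonNeumannRegular_zero, u.isUnit.isVonNeumannRegular]

theorem Nat.Prime.pow_succ_le_sq_totient_add_one {p : ℕ} (hp : p.Prime) (k : ℕ) :
    p ^ (k + 1) ≤ (Nat.totient (p ^ (k + 1)) + 1) ^ 2 := by
  rw [Nat.totient_prime_pow_succ hp]
  have hp4 : p ≤ 4 * (p - 1) := by have := hp.two_le; omega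
  calc p ^ (k + 1) = p ^ k * p := pow_succ p k
    _ ≤ 4 * (p ^ k * (p - 1)) * 1 := by rw [mul_one, mul_left_comm]; gcongr
    _ ≤ (p ^ k * (p - 1) + 1) ^ 2 := four_mul_le_sq_add _ _

theorem le_sq_card_isVonNeumannRegular_zmod (n : ℕ) :
    n ≤ Nat.card {a : ZMod n // IsVonNeumannRegular a} ^ 2 := by
  induction n using Nat.recOnPosPrimePosCoprime with
  | zero => exact Nat.zero_le _
  | one =>
    have : Nonempty {a : ZMod 1 // IsVonNeumannRegular a} := ⟨⟨0, isVonNeumannRegular_zero⟩⟩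
    exact Nat.one_le_pow _ _ Nat.card_pos
  | prime_pow p k hp hk =>
    obtain ⟨k, rfl⟩ := Nat.exists_eq_add_one_of_ne_zero hk.ne'
    have : Fact (1 < p ^ (k + 1)) := ⟨Nat.one_lt_pow k.succ_ne_zero hp.one_lt⟩
    have hunits := card_units_add_one_le_card_isVonNeumannRegular (M := ZMod (p ^ (k + 1)))
    rw [Nat.card_eq_fintype_card, ZMod.card_units_eq_totient] at hunits
    exact (hp.pow_succ_le_sq_totient_add_one k).trans (Nat.pow_le_pow_left hunits 2)
  | coprime a b _ _ hab iha ihb =>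
    rw [card_isVonNeumannRegular_congr (ZMod.chineseRemainder hab).toMulEquiv,
      card_isVonNeumannRegular_prod, mul_pow]
    exact Nat.mul_le_mul iha ihb

theorem isRegularMod_iff_isVonNeumannRegular (n : ℕ) (a : ℤ) :
    IsRegularMod n a ↔ IsVonNeumannRegular (a : ZMod n) := by
  simp only [IsRegularMod, IsVonNeumannRegular, ← ZMod.intCast_eq_intCast_iff,
    ZMod.intCast_surjective.exists, Int.cast_mul, Int.cast_pow]

theorem ZMod.card_filter_Icc_natCast (n : ℕ) [NeZero n] (p : ZMod n → Prop) [DecidablePred p] :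
    ((Finset.Icc 1 n).filter fun a : ℕ => p a).card = (Finset.univ.filter p).card := by
  have hcast (x : ZMod n) : (((x - 1).val + 1 : ℕ) : ZMod n) = x := by
    rw [Nat.cast_succ, ZMod.natCast_zmod_val, sub_add_cancel]
  refine Finset.card_bij' (fun a _ => (a : ZMod n)) (fun x _ => (x - 1).val + 1) ?_ ?_ ?_ ?_
  · intro a ha
    simpa using (Finset.mem_filter.mp ha).2
  · intro x hx
    simp only [Finset.mem_filter, Finset.mem_Icc, hcast]
    exact ⟨⟨Nat.le_add_left _ _, (x - 1).val_lt⟩, (Finset.mem_filter.mp hx).2⟩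
  · intro a ha
    obtain ⟨ha1, han⟩ := Finset.mem_Icc.mp (Finset.mem_filter.mp ha).1
    rw [← Nat.cast_pred ha1, ZMod.val_cast_of_lt (by omega)]
    omega
  · intro x _
    exact hcast x

theorem rho_eq_card_isVonNeumannRegular (n : ℕ) [NeZero n] :
    rho n = Nat.card {a : ZMod n // IsVonNeumannRegular a} := by
  classical
  simp only [rho, isRegularMod_iff_isVonNeumannRegular, Int.cast_natCast]
  rw [ZMod.card_filter_Icc_natCast n IsVonNeumannRegular, Nat.card_eq_fintype_card,
    Fintype.card_subtype]

theorem sqrt_le_rho_le_self (n : ℕ) (hn : 1 ≤ n) :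
    Real.sqrt n ≤ rho n ∧ rho n ≤ n := by
  have : NeZero n := ⟨Nat.one_le_iff_ne_zero.mp hn⟩
  refine ⟨(Real.sqrt_le_left (Nat.cast_nonneg _)).mpr ?_, ?_⟩
  · rw [rho_eq_card_isVonNeumannRegular]
    exact_mod_cast le_sq_card_isVonNeumannRegular_zmod n
  · classical
    exact (Finset.card_filter_le _ _).trans_eq (by simp)
end

section
/- For every integer n ≥ 1, ϱ(n) is even if and only if n ≡ 2 (mod 4). -/
open Finset

theorem Finset.even_card_iff_even_card_filter_fixed {α : Type*} [DecidableEq α] (s : Finset α)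
    (g : α → α) (hg : ∀ a ∈ s, g a ∈ s) (hgg : ∀ a ∈ s, g (g a) = a) :
    Even #s ↔ Even #{a ∈ s | g a = a} := by
  have hmoved : Even #{a ∈ s | g a ≠ a} := by
    have hsum : ∑ a ∈ s with g a ≠ a, (1 : ZMod 2) = 0 := by
      refine sum_involution (fun a _ => g a) (fun _ _ => by decide) (fun a ha _ => ?_)
        (fun a ha => ?_) (fun a ha => hgg a (mem_filter.mp ha).1)
      · exact (mem_filter.mp ha).2
      · obtain ⟨has, hne⟩ := mem_filter.mp ha
        exact mem_filter.mpr ⟨hg a has, by rwa [hgg a has, ne_comm]⟩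
    simpa [ZMod.natCast_eq_zero_iff_even] using hsum
  rw [← card_filter_add_card_filter_not (p := fun a => g a = a), Nat.even_add]
  simp [hmoved]

theorem IsRegularMod.of_modEq {n a b : ℤ} (h : IsRegularMod n a) (hab : a ≡ b [ZMOD n]) :
    IsRegularMod n b := by
  obtain ⟨x, hx⟩ := h
  exact ⟨x, ((hab.pow 2).mul_right x).symm.trans (hx.trans hab)⟩

theorem IsRegularMod.neg {n a : ℤ} (h : IsRegularMod n a) : IsRegularMod n (-a) := by
  obtain ⟨x, hx⟩ := h
  exact ⟨-x, by simpa [neg_sq] using hx.neg⟩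

theorem IsRegularMod.self_sub {n a : ℤ} (h : IsRegularMod n a) : IsRegularMod n (n - a) :=
  h.neg.of_modEq (by simp [Int.modEq_iff_dvd])

theorem isRegularMod_two_mul_self_iff {m : ℤ} (hm : m ≠ 0) :
    IsRegularMod (2 * m) m ↔ Odd m := by
  constructor
  · rintro ⟨x, hx⟩
    have hdvd : m * 2 ∣ m * (1 - m * x) := by
      convert Int.modEq_iff_dvd.mp hx using 1 <;> ring
    have hodd : Odd (m * x) := by
      simpa using odd_one.sub_even (even_iff_two_dvd.mpr ((mul_dvd_mul_iff_left hm).mp hdvd))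
    exact (Int.odd_mul.mp hodd).1
  · rintro ⟨k, rfl⟩
    exact ⟨1, Int.modEq_iff_dvd.mpr ⟨-k, by ring⟩⟩

theorem isRegularMod_and_sub_eq_self_iff {n a : ℕ} (ha : 0 < a) :
    IsRegularMod n a ∧ n - a = a ↔ 2 * a = n ∧ n % 4 = 2 := by
  have hreg_iff : IsRegularMod (2 * a : ℕ) a ↔ a % 2 = 1 := by
    rw [← Nat.odd_iff, ← Int.odd_coe_nat, Nat.cast_mul, Nat.cast_ofNat]
    exact isRegularMod_two_mul_self_iff (by omega)
  constructor
  · rintro ⟨hreg, hfix⟩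
    obtain rfl : n = 2 * a := by omega
    have := hreg_iff.mp hreg
    omega
  · rintro ⟨rfl, hn4⟩
    exact ⟨hreg_iff.mpr (by omega), by omega⟩

open Classical in
noncomputable def regularResidues (n : ℕ) : Finset ℕ :=
  (Ioo 0 n).filter fun a : ℕ => IsRegularMod n a

theorem mem_regularResidues {n a : ℕ} :
    a ∈ regularResidues n ↔ (0 < a ∧ a < n) ∧ IsRegularMod n a := by
  simp [regularResidues]

theorem rho_eq_card_regularResidues_add_one {n : ℕ} (hn : 0 < n) :
    rho n = #(regularResidues n) + 1 := by
  rw [rho, regularResidues, show Icc 1 n = Ioc 0 n from Icc_add_one_left_eq_Ioc 0 n,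
    ← Ioo_insert_right hn, filter_insert, if_pos (isRegularMod_self n),
    card_insert_of_notMem (by simp)]

theorem self_sub_mem_regularResidues {n a : ℕ} (ha : a ∈ regularResidues n) :
    n - a ∈ regularResidues n := by
  obtain ⟨⟨ha0, han⟩, hreg⟩ := mem_regularResidues.mp ha
  refine mem_regularResidues.mpr ⟨⟨by omega, by omega⟩, ?_⟩
  rw [Nat.cast_sub han.le]
  exact hreg.self_sub

theorem filter_sub_eq_self_regularResidues (n : ℕ) :
    {a ∈ regularResidues n | n - a = a} = if n % 4 = 2 then {n / 2} else ∅ := by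
  ext a
  rw [mem_filter, mem_regularResidues, and_assoc]
  by_cases ha : 0 < a
  · rw [isRegularMod_and_sub_eq_self_iff ha]
    split_ifs <;> simp <;> omega
  · split_ifs <;> simp <;> omega

theorem rho_even_iff (n : ℕ) (hn : 1 ≤ n) : Even (rho n) ↔ n % 4 = 2 := by
  rw [rho_eq_card_regularResidues_add_one hn, Nat.even_add_one,
    even_card_iff_even_card_filter_fixed _ (n - ·) (fun _ => self_sub_mem_regularResidues)
      (fun a ha => Nat.sub_sub_self (mem_regularResidues.mp ha).1.2.le),
    filter_sub_eq_self_regularResidues]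
  split_ifs <;> simp [*]
end
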